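/- For a bounded random variable X with distribution given by a finite probability mass function, lim_{β→0⁺} CVaR_β(X) = essinf(X), where CVaR_β(X) = -inf_{ζ} E[ζ + (−X−ζ)₊/β]. -/

import Mathlib

open MeasureTheory

noncomputable def cvar {Ω : Type*} [MeasurableSpace Ω] (μ : Measure Ω)
    (β : ℝ) (X : Ω → ℝ) : ℝ :=
  -⨅ ζ : ℝ, ∫ ω, (ζ + max (-X ω - ζ) 0 / β) ∂μ

/-!
The essential infimum `m` of a random variable with finitely many values is an atom of positive
probability `p`. For `0 < β ≤ p` the objective `ζ ↦ ζ + E[(-X - ζ)₊] / β` is minimised at `ζ = -m`: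
below `-m` its slope is `1 - P(X < -ζ) / β ≤ 1 - p / β ≤ 0`. Hence `CVaR_β(X) = m` exactly for all
small `β`, and the limit is trivial.
-/

open Set Filter

section

variable {Ω : Type*} [MeasurableSpace Ω] {μ : Measure Ω}

theorem integrable_of_finite_range [IsFiniteMeasure μ] {X : Ω → ℝ} (hXm : Measurable X)
    (hfin : (range X).Finite) : Integrable X μ := by
  obtain ⟨C, hC⟩ := hfin.isBounded.exists_norm_le
  exact .of_bound hXm.aestronglyMeasurable C (ae_of_all _ fun ω => hC _ (mem_range_self ω))

theorem MeasureTheory.Integrable.neg_sub_const_pos_part [IsFiniteMeasure μ] {X : Ω → ℝ}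
    (hX : Integrable X μ) (ζ : ℝ) : Integrable (fun ω => max (-X ω - ζ) 0) μ :=
  (hX.neg.sub (integrable_const ζ)).pos_part

/-- The least value taken with positive probability is the witness. -/
theorem exists_ae_le_and_measure_preimage_ne_zero {α : Type*} [LinearOrder α] {X : Ω → α}
    (hfin : (range X).Finite) (hμ : μ ≠ 0) : ∃ m, (∀ᵐ ω ∂μ, m ≤ X ω) ∧ μ (X ⁻¹' {m}) ≠ 0 := by
  set S := {x ∈ range X | μ (X ⁻¹' {x}) ≠ 0}
  have null_of_notMem : ∀ x ∈ range X, x ∉ S → μ (X ⁻¹' {x}) = 0 :=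
    fun x hx hxS => by_contra fun h => hxS ⟨hx, h⟩
  have preimage_null (T : Set α) (hT : T ⊆ range X) (hTS : ∀ x ∈ T, x ∉ S) :
      μ (⋃ x ∈ T, X ⁻¹' {x}) = 0 :=
    (measure_biUnion_null_iff ((hfin.subset hT).countable)).2
      fun x hx => null_of_notMem x (hT hx) (hTS x hx)
  have hS : S.Nonempty := by
    by_contra! hS
    refine hμ (Measure.measure_univ_eq_zero.1 (measure_mono_null ?_
      (preimage_null (range X) subset_rfl fun x _ => hS ▸ notMem_empty x)))
    exact fun ω _ => mem_biUnion (mem_range_self ω) rfl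
  obtain ⟨m, hmS, hmin⟩ := exists_min_image S id (hfin.subset (sep_subset _ _)) hS
  refine ⟨m, ae_iff.2 (measure_mono_null ?_ (preimage_null {x ∈ range X | x < m}
    (sep_subset _ _) fun x hx hxS => (hmin x hxS).not_gt hx.2)), hmS.2⟩
  exact fun ω hω => mem_biUnion ⟨mem_range_self ω, not_le.1 hω⟩ rfl

theorem essInf_eq_of_ae_le_of_measure_preimage_ne_zero {α : Type*}
    [ConditionallyCompleteLinearOrder α] {X : Ω → α} {m : α} (hm : ∀ᵐ ω ∂μ, m ≤ X ω)
    (hpos : μ (X ⁻¹' {m}) ≠ 0) : essInf X μ = m := by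
  rw [essInf_eq_sSup]
  refine IsGreatest.csSup_eq ⟨by simpa [ae_iff] using hm, fun a ha => ?_⟩
  by_contra! hma
  exact hpos (measure_mono_null (fun ω (hω : X ω = m) => (hω ▸ hma : X ω < a)) ha)

end

section CVaR

variable {Ω : Type*} [MeasurableSpace Ω] {μ : Measure Ω} [IsProbabilityMeasure μ] {X : Ω → ℝ}

theorem integral_cvar_objective (hX : Integrable X μ) (β ζ : ℝ) :
    ∫ ω, (ζ + max (-X ω - ζ) 0 / β) ∂μ = ζ + (∫ ω, max (-X ω - ζ) 0 ∂μ) / β := by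
  rw [integral_add (integrable_const ζ) ((hX.neg_sub_const_pos_part ζ).div_const β),
    integral_const, probReal_univ, one_smul, integral_div]

theorem neg_le_integral_cvar_objective (hXm : Measurable X) (hX : Integrable X μ) {m β : ℝ}
    (hβ : 0 < β) (hβm : β ≤ μ.real (X ⁻¹' {m})) (ζ : ℝ) :
    -m ≤ ∫ ω, (ζ + max (-X ω - ζ) 0 / β) ∂μ := by
  rw [integral_cvar_objective hX]
  have hI : 0 ≤ ∫ ω, max (-X ω - ζ) 0 ∂μ := integral_nonneg fun ω => le_max_right _ _
  rcases le_or_gt (-m) ζ with hζ | hζ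
  · linarith [div_nonneg hI hβ.le]
  have hatom : (-m - ζ) * β ≤ ∫ ω, max (-X ω - ζ) 0 ∂μ :=
    calc (-m - ζ) * β ≤ μ.real (X ⁻¹' {m}) * (-m - ζ) := by nlinarith
      _ = ∫ ω in X ⁻¹' {m}, max (-X ω - ζ) 0 ∂μ := by
        rw [setIntegral_congr_fun (hXm (measurableSet_singleton m))
          fun ω (hω : X ω = m) => by rw [hω, max_eq_left (by linarith)], setIntegral_const,
          smul_eq_mul]
      _ ≤ ∫ ω, max (-X ω - ζ) 0 ∂μ :=
        setIntegral_le_integral (hX.neg_sub_const_pos_part ζ)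
          (ae_of_all _ fun ω => le_max_right _ _)
  linarith [(le_div_iff₀ hβ).2 hatom]

theorem integral_cvar_objective_neg_of_ae_le (hX : Integrable X μ) {m : ℝ}
    (hm : ∀ᵐ ω ∂μ, m ≤ X ω) (β : ℝ) : ∫ ω, (-m + max (-X ω - -m) 0 / β) ∂μ = -m := by
  have hzero : (fun ω => max (-X ω - -m) 0) =ᵐ[μ] 0 :=
    hm.mono fun ω h => max_eq_right (by linarith)
  rw [integral_cvar_objective hX, integral_eq_zero_of_ae hzero, zero_div, add_zero]

theorem cvar_eq_of_ae_le (hXm : Measurable X) (hX : Integrable X μ) {m β : ℝ}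
    (hm : ∀ᵐ ω ∂μ, m ≤ X ω) (hβ : 0 < β) (hβm : β ≤ μ.real (X ⁻¹' {m})) :
    cvar μ β X = m := by
  have hleast : IsLeast (range fun ζ => ∫ ω, (ζ + max (-X ω - ζ) 0 / β) ∂μ) (-m) :=
    ⟨⟨-m, integral_cvar_objective_neg_of_ae_le hX hm β⟩,
      forall_mem_range.2 (neg_le_integral_cvar_objective hXm hX hβ hβm)⟩
  rw [cvar, hleast.isGLB.ciInf_eq, neg_neg]

end CVaR

theorem cvar_tendsto_essInf
    {Ω : Type*} [MeasurableSpace Ω] (μ : Measure Ω) [IsProbabilityMeasure μ]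
    (X : Ω → ℝ) (hXmeas : Measurable X) (hfin : (Set.range X).Finite) :
    Filter.Tendsto (fun β => cvar μ β X) (nhdsWithin 0 (Set.Ioi 0))
      (nhds (essInf X μ)) := by
  obtain ⟨m, hm, hatom⟩ :=
    exists_ae_le_and_measure_preimage_ne_zero hfin (IsProbabilityMeasure.ne_zero μ)
  have hatom_pos : 0 < μ.real (X ⁻¹' {m}) := ENNReal.toReal_pos hatom (measure_ne_top μ _)
  rw [essInf_eq_of_ae_le_of_measure_preimage_ne_zero hm hatom]
  refine tendsto_const_nhds.congr' ?_
  filter_upwards [Ioo_mem_nhdsGT hatom_pos] with β hβ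
  exact (cvar_eq_of_ae_le hXmeas (integrable_of_finite_range hXmeas hfin) hm hβ.1 hβ.2.le).symm
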